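/- arXiv:2307.12415 — 2 statements merged into one kernel-verified Lean document; each statement's English description precedes it below -/
import Mathlib

section
/- Let p be a prime and let R be a commutative ring in which p·1 = 0. If a sequence x : ℕ → R satisfies x(0) = 1 and x(a)·x(b) = C(a+b, a)·x(a+b) for all a, b ∈ ℕ (where C(a+b, a) is the binomial coefficient, viewed in R via the canonical map ℕ → R), then x(a)^p = 0 for every a ≥ 1. -/
/-!
Iterating the product rule gives `x a ^ k = (∏ i < k, C(i a + a, a)) * x (k a)`.
For `k = p` the last factor is `C(p a, a) = p * C(p a - 1, a - 1)`, which vanishes in `R`.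
-/

open Finset

theorem pow_eq_prod_choose_mul {R : Type*} [CommRing R] {x : ℕ → R} (h0 : x 0 = 1)
    (hmul : ∀ a b : ℕ, x a * x b = ((a + b).choose a : R) * x (a + b)) (a k : ℕ) :
    x a ^ k = (∏ i ∈ range k, ((i * a + a).choose a : R)) * x (k * a) := by
  induction k with
  | zero => simp [h0]
  | succ k ih =>
    rw [pow_succ, ih, mul_assoc, hmul, Nat.choose_symm_add, prod_range_succ, Nat.succ_mul]
    ring

/-- Let `p` be a prime and `R` a commutative ring with `p·1 = 0`.  If `x : ℕ → R`
satisfies `x 0 = 1` and `x a * x b = C(a+b, a) * x (a+b)` for all `a b`, then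
`x a ^ p = 0` for every `a ≥ 1`. -/
theorem statement5 {R : Type*} [CommRing R] (p : ℕ) (hp : p.Prime)
    (hchar : (p : R) = 0) (x : ℕ → R) (h0 : x 0 = 1)
    (hmul : ∀ a b : ℕ, x a * x b = ((a + b).choose a : R) * x (a + b))
    (a : ℕ) (ha : 1 ≤ a) :
    x a ^ p = 0 := by
  obtain ⟨m, rfl⟩ : ∃ m, p = m + 1 := Nat.exists_eq_add_one.mpr hp.pos
  have hlast : ((m * a + a).choose a : R) = 0 := by
    rw [Nat.choose_mul_add (by omega), Nat.cast_mul, hchar, zero_mul]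
  rw [pow_eq_prod_choose_mul h0 hmul, prod_range_succ, hlast, mul_zero, zero_mul]
end

section
/- The map Λ belongs to Coind'(k), the coinduction of the trivial one-dimensional U'(𝔥)-module k, and for every H ∈ 𝔥 and every u ∈ U'(𝔤) one has Λ(u·ι'(H)) = trad_{𝔤/𝔥}(H)·Λ(u); equivalently, for every H ∈ 𝔥, the action of H on Λ in the U'(𝔤)-module Coind'(k) is multiplication by trad_{𝔤/𝔥}(H). -/
noncomputable section

/-- The relation on `U(𝔤)` whose closure defines the restricted enveloping algebra. -/
def rRel (k : Type*) [Field k] (L : Type*) [LieRing L] [LieAlgebra k L]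
    (p : ℕ) (pOp : L → L) :
    UniversalEnvelopingAlgebra k L → UniversalEnvelopingAlgebra k L → Prop :=
  fun x y => ∃ X : L,
    x = UniversalEnvelopingAlgebra.ι k X ^ p ∧ y = UniversalEnvelopingAlgebra.ι k (pOp X)

/-- The restricted enveloping algebra `U'(𝔤) = U(𝔤)/I`. -/
abbrev RUEA (k : Type*) [Field k] (L : Type*) [LieRing L] [LieAlgebra k L]
    (p : ℕ) (pOp : L → L) : Type _ :=
  RingQuot (rRel k L p pOp)

/-- `ι' : 𝔤 → U'(𝔤)`, the composite of `ι` with the quotient map. -/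
def rι (k : Type*) [Field k] {L : Type*} [LieRing L] [LieAlgebra k L]
    (p : ℕ) (pOp : L → L) (X : L) : RUEA k L p pOp :=
  RingQuot.mkAlgHom k (rRel k L p pOp) (UniversalEnvelopingAlgebra.ι k X)

/-- For `a ∈ {0,…,p−1}^n`, the ordered monomial `e^a = ι'(e_1)^{a_1} ⋯ ι'(e_n)^{a_n}`. -/
def eMonR (k : Type*) [Field k] {L : Type*} [LieRing L] [LieAlgebra k L]
    (p : ℕ) (pOp : L → L) {n : ℕ} (e : Fin n → L) (a : Fin n → Fin p) :
    RUEA k L p pOp :=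
  ((List.finRange n).map fun i => rι k p pOp (e i) ^ (a i : ℕ)).prod

/-- The endomorphism of `𝔤/𝔥` induced by `ad(h)` for `h ∈ 𝔥`. -/
def adQuot {k : Type*} [Field k] {L : Type*} [LieRing L] [LieAlgebra k L]
    (H : LieSubalgebra k L) (h : H) :
    (L ⧸ H.toSubmodule) →ₗ[k] (L ⧸ H.toSubmodule) :=
  Submodule.mapQ _ _ (LieAlgebra.ad k L (h : L)) (fun _ hx => H.lie_mem h.2 hx)

/-- `trad_{𝔤/𝔥} : 𝔥 → k`, the trace of the adjoint action of `𝔥` on `𝔤/𝔥`. -/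
def trad {k : Type*} [Field k] {L : Type*} [LieRing L] [LieAlgebra k L]
    (H : LieSubalgebra k L) (h : H) : k :=
  LinearMap.trace k (L ⧸ H.toSubmodule) (adQuot H h)

/-!
Put `top = (p-1, …, p-1)` and `T = |top| = n(p-1)`. Reordering the letters of a word in `U'(𝔤)`
changes it only by shorter words, and `p` equal letters collapse to one by `ι'(x)^p = ι'(x^[p])`.
Straightening therefore puts every word of length `< T` into the span of the monomials `φ(w) e^a`
with `|a| < T`, where `Λ` vanishes; `Λ` also kills `ι'(𝔥) U'(𝔤)` because `ε_𝔥` kills `𝔥`. Now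
`e^top ι'(H) = ι'(H) e^top - ∑_t (e^top with its `t`-th letter `e_i` replaced by `[H, e_i]`)`.
In the `t`-th summand an `𝔥`-letter, or a letter `e_j` with `j ≠ i` (which then occurs `p` times),
gives `Λ = 0`, so `Λ` reads off the `e_i`-coordinate of `[H, e_i]` in `𝔤/𝔥`. Every diagonal entry
of `ad H` on `𝔤/𝔥` is counted `p - 1 ≡ -1` times, whence `Λ(e^top ι'(H)) = trad(H)`, while for
`a ≠ top` the word `e^a` is too short and `Λ(e^a ι'(H)) = 0`.
-/

open List

lemma List.perm_replicate_append_diff {α : Type*} [DecidableEq α] {l : List α} {a : α} {m : ℕ}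
    (h : m ≤ l.count a) : l ~ List.replicate m a ++ l.diff (List.replicate m a) :=
  (List.subperm_append_diff_self_of_count_le fun x hx => by
    rwa [List.eq_of_mem_replicate hx, List.count_replicate_self]).symm

lemma List.exists_perm_map_sumElim {α β γ : Type*} (f : α → γ) (g : β → γ) (w : List (α ⊕ β)) :
    ∃ (as : List α) (bs : List β), w.map (Sum.elim f g) ~ bs.map g ++ as.map f := by
  induction w with
  | nil => exact ⟨[], [], by simp⟩
  | cons s w ih =>
    obtain ⟨as, bs, h⟩ := ih
    rcases s with a | b
    · exact ⟨a :: as, bs, by simpa using (h.cons (f a)).trans perm_middle.symm⟩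
    · exact ⟨as, b :: bs, by simpa using h⟩

section LeftCoefficients

variable {R A ι : Type*} [CommRing R] [Ring A] [Algebra R A] [Fintype ι] {S : Subalgebra R A}
  {m : ι → A} (hdec : ∀ u : A, ∃! c : ι → A, (∀ a, c a ∈ S) ∧ u = ∑ a, c a * m a)

def leftCoeff : A →ₗ[R] ι → A where
  toFun u := (hdec u).choose
  map_add' u v := by
    refine ((hdec (u + v)).choose_spec.2 _ ⟨fun a => ?_, ?_⟩).symm
    · exact add_mem ((hdec u).choose_spec.1.1 a) ((hdec v).choose_spec.1.1 a)
    · simp only [Pi.add_apply, add_mul, Finset.sum_add_distrib]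
      rw [← (hdec u).choose_spec.1.2, ← (hdec v).choose_spec.1.2]
  map_smul' r u := by
    refine ((hdec (r • u)).choose_spec.2 _ ⟨fun a => ?_, ?_⟩).symm
    · exact Subalgebra.smul_mem _ ((hdec u).choose_spec.1.1 a) r
    · simp only [Pi.smul_apply, RingHom.id_apply, smul_mul_assoc, ← Finset.smul_sum]
      rw [← (hdec u).choose_spec.1.2]

lemma leftCoeff_mem (u : A) (a : ι) : leftCoeff hdec u a ∈ S :=
  (hdec u).choose_spec.1.1 a

lemma sum_leftCoeff_mul (u : A) : ∑ a, leftCoeff hdec u a * m a = u :=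
  (hdec u).choose_spec.1.2.symm

lemma leftCoeff_eq {c : ι → A} (hc : ∀ a, c a ∈ S) : leftCoeff hdec (∑ a, c a * m a) = c :=
  ((hdec _).choose_spec.2 c ⟨hc, rfl⟩).symm

lemma leftCoeff_mul_left {v : A} (hv : v ∈ S) (u : A) (a : ι) :
    leftCoeff hdec (v * u) a = v * leftCoeff hdec u a := by
  conv_lhs => rw [← sum_leftCoeff_mul hdec u, Finset.mul_sum]
  simp only [← mul_assoc]
  rw [leftCoeff_eq hdec fun a => mul_mem hv (leftCoeff_mem hdec u a)]

lemma leftCoeff_mul_self [DecidableEq ι] {v : A} (hv : v ∈ S) (a : ι) :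
    leftCoeff hdec (v * m a) = Pi.single a v := by
  convert leftCoeff_eq hdec (c := Pi.single a v) fun b => ?_
  · simp [Pi.single_apply, ite_mul]
  · by_cases hb : b = a
    · subst hb; simpa using hv
    · simp [hb, zero_mem]

end LeftCoefficients

namespace RUEA

attribute [local instance] LieRing.ofAssociativeRing

variable {k : Type*} [Field k] {L : Type*} [LieRing L] [LieAlgebra k L] (p : ℕ) (pOp : L → L)

def ιₗ : L →ₗ[k] RUEA k L p pOp :=
  (RingQuot.mkAlgHom k (rRel k L p pOp)).toLinearMap ∘ₗ (UniversalEnvelopingAlgebra.ι k).toLinearMap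

@[simp] lemma ιₗ_apply (x : L) : ιₗ p pOp x = rι k p pOp x := rfl

lemma rι_lie (x y : L) :
    rι k p pOp ⁅x, y⁆ = rι k p pOp x * rι k p pOp y - rι k p pOp y * rι k p pOp x := by
  simp only [rι, LieHom.map_lie, Ring.lie_def, map_sub, map_mul]

lemma rι_pow (x : L) : rι k p pOp x ^ p = rι k p pOp (pOp x) := by
  simp only [rι, ← map_pow]
  exact RingQuot.mkAlgHom_rel k ⟨x, rfl, rfl⟩

def word (l : List L) : RUEA k L p pOp := (l.map (rι k p pOp)).prod

@[simp] lemma word_nil : word (k := k) p pOp [] = 1 := rfl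

@[simp] lemma word_cons (x : L) (l : List L) :
    word (k := k) p pOp (x :: l) = rι k p pOp x * word p pOp l := by
  simp [word]

@[simp] lemma word_append (l₁ l₂ : List L) :
    word (k := k) p pOp (l₁ ++ l₂) = word p pOp l₁ * word p pOp l₂ := by
  simp [word]

@[simp] lemma word_replicate (c : ℕ) (x : L) :
    word (k := k) p pOp (replicate c x) = rι k p pOp x ^ c := by
  simp [word, map_replicate, prod_replicate]

lemma word_set {l : List L} {t : ℕ} (ht : t < l.length) (x : L) :
    word (k := k) p pOp (l.set t x) =
      word p pOp (l.take t) * rι k p pOp x * word p pOp (l.drop (t + 1)) := by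
  rw [set_eq_take_cons_drop x ht, word_append, word_cons, mul_assoc]

def wordSpanLT (m : ℕ) : Submodule k (RUEA k L p pOp) :=
  Submodule.span k {u | ∃ l : List L, l.length < m ∧ word p pOp l = u}

variable {p pOp}

lemma word_mem_wordSpanLT {l : List L} {m : ℕ} (h : l.length < m) :
    word (k := k) p pOp l ∈ wordSpanLT p pOp m :=
  Submodule.subset_span ⟨l, h, rfl⟩

lemma wordSpanLT_mono {m m' : ℕ} (h : m ≤ m') :
    wordSpanLT (k := k) p pOp m ≤ wordSpanLT p pOp m' :=
  Submodule.span_mono fun _ ⟨l, hl, hu⟩ => ⟨l, hl.trans_le h, hu⟩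

lemma rι_mul_mem_wordSpanLT (x : L) {m : ℕ} {u : RUEA k L p pOp}
    (hu : u ∈ wordSpanLT p pOp m) : rι k p pOp x * u ∈ wordSpanLT p pOp (m + 1) := by
  induction hu using Submodule.span_induction with
  | mem _ h =>
    obtain ⟨l, hl, rfl⟩ := h
    rw [← word_cons]
    exact word_mem_wordSpanLT (by simpa using hl)
  | zero => simp
  | add _ _ _ _ h₁ h₂ => rw [mul_add]; exact add_mem h₁ h₂
  | smul c _ _ h => rw [mul_smul_comm]; exact Submodule.smul_mem _ c h

lemma word_sub_word_mem_of_perm {l l' : List L} (h : l ~ l') :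
    word p pOp l - word p pOp l' ∈ wordSpanLT (k := k) p pOp l.length := by
  induction h with
  | nil => simp
  | cons x _ ih =>
    rw [word_cons, word_cons, ← mul_sub]
    exact rι_mul_mem_wordSpanLT x ih
  | swap x y l =>
    have : word (k := k) p pOp (y :: x :: l) - word p pOp (x :: y :: l) =
        word p pOp (⁅y, x⁆ :: l) := by
      simp only [word_cons, rι_lie, ← mul_assoc, sub_mul]
    rw [this]
    exact word_mem_wordSpanLT (by simp)
  | trans h₁₂ _ ih₁₂ ih₂₃ =>
    rw [← sub_add_sub_cancel]
    exact add_mem ih₁₂ (h₁₂.length_eq ▸ ih₂₃)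

lemma word_mem_wordSpanLT_of_perm_replicate (hp : 2 ≤ p) {l l' : List L} {x : L}
    (h : l ~ replicate p x ++ l') : word p pOp l ∈ wordSpanLT (k := k) p pOp l.length := by
  have hlen : l.length = p + l'.length := by simpa using h.length_eq
  have hword : word (k := k) p pOp (replicate p x ++ l') = word p pOp (pOp x :: l') := by
    rw [word_append, word_replicate, rι_pow, word_cons]
  rw [← sub_add_cancel (word p pOp l) (word p pOp (replicate p x ++ l')), hword]
  exact add_mem (hword ▸ word_sub_word_mem_of_perm h) (word_mem_wordSpanLT (by simp; omega))

lemma word_mul_rι (y : L) (l : List L) :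
    word (k := k) p pOp l * rι k p pOp y = rι k p pOp y * word p pOp l -
      ∑ t : Fin l.length, word p pOp (l.set t ⁅y, l[t]⁆) := by
  induction l with
  | nil => simp
  | cons x l ih =>
    simp only [length_cons, Fin.sum_univ_succ]
    simp only [word_cons, mul_assoc, ih, Fin.getElem_fin, Fin.val_zero, set_cons_zero,
      getElem_cons_zero, Fin.val_succ, set_cons_succ, getElem_cons_succ, mul_sub,
      Finset.mul_sum, rι_lie]
    simp only [← mul_assoc, sub_mul]
    abel

lemma word_mem_span_word_map {ι : Type*} {f : ι → L} (hf : Submodule.span k (Set.range f) = ⊤)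
    (l : List L) : word (k := k) p pOp l ∈ Submodule.span k
      {u | ∃ w : List ι, w.length = l.length ∧ word p pOp (w.map f) = u} := by
  induction l with
  | nil => exact Submodule.subset_span ⟨[], rfl, rfl⟩
  | cons x l ih =>
    have hx : ιₗ p pOp x ∈ Submodule.span k (ιₗ (k := k) p pOp '' Set.range f) := by
      rw [← Submodule.map_span, hf]
      exact Submodule.mem_map_of_mem Submodule.mem_top
    rw [word_cons, ← ιₗ_apply]
    have h := Submodule.mul_mem_mul hx ih
    rw [Submodule.span_mul_span] at h
    refine Submodule.span_mono ?_ h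
    rintro _ ⟨_, ⟨_, ⟨i, rfl⟩, rfl⟩, _, ⟨w, hw, rfl⟩, rfl⟩
    exact ⟨i :: w, by simp [hw], by simp⟩

section Monomials

variable {n : ℕ}

def expList (d : Fin n → ℕ) : List (Fin n) :=
  (finRange n).flatMap fun i => replicate (d i) i

lemma count_expList (d : Fin n → ℕ) (j : Fin n) : (expList d).count j = d j := by
  simp [expList, count_flatMap, count_replicate, Function.comp_def, ← Fin.sum_univ_def]

lemma length_expList (d : Fin n → ℕ) : (expList d).length = ∑ i, d i := by
  simp [expList, length_flatMap, ← Fin.sum_univ_def]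

lemma perm_expList_count (idx : List (Fin n)) : idx ~ expList fun i => idx.count i :=
  perm_iff_count.2 fun j => (count_expList (fun i => idx.count i) j).symm

lemma eMonR_eq_word (e : Fin n → L) (a : Fin n → Fin p) :
    eMonR k p pOp e a = word p pOp ((expList fun i => (a i : ℕ)).map e) := by
  simp [eMonR, expList, word, flatMap_def, prod_flatten, map_replicate, Function.comp_def]

lemma sum_map_expList {M : Type*} [AddCommMonoid M] (d : Fin n → ℕ) (F : Fin n → M) :
    ((expList d).map F).sum = ∑ i, d i • F i := by
  simp [expList, flatMap_def, sum_flatten, map_replicate, Function.comp_def, ← Fin.sum_univ_def]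

end Monomials

section Filtration

variable {n : ℕ} {H : LieSubalgebra k L} {pOpH : H → H} (φ : RUEA k H p pOpH →ₐ[k] RUEA k L p pOp)
  (e : Fin n → L)

def monomialSpanLT (m : ℕ) : Submodule k (RUEA k L p pOp) :=
  Submodule.span k {u | ∃ w a, ∑ i, (a i : ℕ) < m ∧ φ w * eMonR k p pOp e a = u}

variable {φ}

lemma monomialSpanLT_mono {m m' : ℕ} (h : m ≤ m') :
    monomialSpanLT φ e m ≤ monomialSpanLT φ e m' :=
  Submodule.span_mono fun _ ⟨w, a, ha, hu⟩ => ⟨w, a, ha.trans_le h, hu⟩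

lemma word_map_val_mem_range (hφ : ∀ h : H, φ (rι k p pOpH h) = rι k p pOp (h : L))
    (hs : List H) : word p pOp (hs.map Subtype.val) ∈ φ.range := by
  induction hs with
  | nil => exact Subalgebra.one_mem _
  | cons h hs ih => exact Subalgebra.mul_mem _ ⟨_, hφ h⟩ ih

lemma word_append_mem_monomialSpanLT (hp : 2 ≤ p)
    (hφ : ∀ h : H, φ (rι k p pOpH h) = rι k p pOp (h : L)) {m : ℕ}
    (hshort : wordSpanLT p pOp m ≤ monomialSpanLT φ e (m + 1))
    {hs : List H} {idx : List (Fin n)} (hlen : hs.length + idx.length ≤ m) :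
    word p pOp (hs.map Subtype.val ++ idx.map e) ∈ monomialSpanLT φ e (m + 1) := by
  have hshort' : wordSpanLT p pOp (hs.length + idx.length) ≤ monomialSpanLT φ e (m + 1) :=
    (wordSpanLT_mono hlen).trans hshort
  by_cases hsmall : ∀ i, idx.count i < p
  · let a : Fin n → Fin p := fun i => ⟨idx.count i, hsmall i⟩
    have hperm : hs.map Subtype.val ++ idx.map e ~
        hs.map Subtype.val ++ (expList fun i => (a i : ℕ)).map e :=
      ((perm_expList_count idx).map e).append_left _
    obtain ⟨w, hw⟩ := (AlgHom.mem_range φ).1 (word_map_val_mem_range hφ hs)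
    have hmon : φ w * eMonR k p pOp e a ∈ monomialSpanLT φ e (m + 1) := by
      refine Submodule.subset_span ⟨w, a, ?_, rfl⟩
      have : ∑ i, (a i : ℕ) = idx.length := by
        simpa [a] using (length_expList (fun i => idx.count i)).symm.trans
          (perm_expList_count idx).length_eq.symm
      omega
    rw [← sub_add_cancel (word p pOp _) (φ w * eMonR k p pOp e a)]
    refine add_mem (hshort' ?_) hmon
    rw [hw, eMonR_eq_word, ← word_append]
    simpa using word_sub_word_mem_of_perm hperm
  · simp only [not_forall, not_lt] at hsmall
    obtain ⟨j, hj⟩ := hsmall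
    have hperm : hs.map Subtype.val ++ idx.map e ~
        replicate p (e j) ++ (hs.map Subtype.val ++ (idx.diff (replicate p j)).map e) := by
      refine (((perm_replicate_append_diff hj).map e).append_left _).trans ?_
      simpa using perm_append_comm_assoc _ _ _
    exact hshort' (by simpa using word_mem_wordSpanLT_of_perm_replicate hp hperm)

theorem wordSpanLT_le_monomialSpanLT (hp : 2 ≤ p)
    (hφ : ∀ h : H, φ (rι k p pOpH h) = rι k p pOp (h : L))
    (he : Submodule.span k (Set.range (Sum.elim e ((↑) : H → L))) = ⊤) (m : ℕ) :
    wordSpanLT p pOp m ≤ monomialSpanLT φ e m := by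
  induction m with
  | zero =>
    refine Submodule.span_le.2 ?_
    rintro _ ⟨l, hl, rfl⟩
    exact absurd hl (Nat.not_lt_zero _)
  | succ m ih =>
    have hshort := ih.trans (monomialSpanLT_mono e m.le_succ)
    refine Submodule.span_le.2 ?_
    rintro _ ⟨l, hl, rfl⟩
    refine Submodule.span_le.2 ?_ (word_mem_span_word_map he l)
    rintro _ ⟨w, hw, rfl⟩
    obtain ⟨idx, hs, hperm⟩ := List.exists_perm_map_sumElim e ((↑) : H → L) w
    have hlen : (w.map (Sum.elim e Subtype.val)).length ≤ m := by simp; omega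
    rw [← sub_add_cancel (word p pOp _) (word p pOp (hs.map Subtype.val ++ idx.map e))]
    exact add_mem (hshort (wordSpanLT_mono hlen (word_sub_word_mem_of_perm hperm)))
      (word_append_mem_monomialSpanLT e hp hφ hshort
        (by simpa using hperm.length_eq.symm.trans_le hlen))

end Filtration

section Functional

variable {n : ℕ} {H : LieSubalgebra k L} {e : Fin n → L}

lemma span_range_sumElim_eq_top
    (hsp : Submodule.span k (Set.range fun i => Submodule.Quotient.mk (p := H.toSubmodule) (e i))
      = ⊤) :
    Submodule.span k (Set.range (Sum.elim e ((↑) : H → L))) = ⊤ := by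
  have hrange : (Set.range fun i => Submodule.Quotient.mk (p := H.toSubmodule) (e i)) =
      H.toSubmodule.mkQ '' Set.range e := by
    rw [← Set.range_comp]; rfl
  rw [hrange, ← Submodule.map_span, Submodule.map_mkQ_eq_top] at hsp
  rwa [Set.Sum.elim_range, Submodule.span_union, Subtype.range_coe, sup_comm,
    show Submodule.span k (H : Set L) = H.toSubmodule from Submodule.span_eq H.toSubmodule]

lemma trad_eq_sum_coord
    (b : Module.Basis (Fin n) k (L ⧸ H.toSubmodule))
    (hb : ∀ i, b i = Submodule.Quotient.mk (e i)) (h : H) :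
    trad H h = ∑ i, b.coord i (Submodule.Quotient.mk ⁅(h : L), e i⁆) := by
  rw [trad, LinearMap.trace_eq_matrix_trace k b, Matrix.trace]
  refine Finset.sum_congr rfl fun i _ => ?_
  rw [Matrix.diag_apply, LinearMap.toMatrix_apply, hb, Module.Basis.coord_apply]
  rfl

variable (Λ : RUEA k L p pOp →ₗ[k] k)

lemma apply_word_eq_zero_of_mem (hΛH : ∀ (h : H) u, Λ (rι k p pOp h * u) = 0) {T : ℕ}
    (hΛshort : ∀ u ∈ wordSpanLT p pOp T, Λ u = 0) {l : List L} (hl : l.length ≤ T)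
    {x : L} (hxl : x ∈ l) (hx : x ∈ H) : Λ (word p pOp l) = 0 := by
  classical
  have hperm := perm_cons_erase hxl
  rw [← sub_add_cancel (word p pOp l) (word p pOp (x :: l.erase x)), map_add,
    hΛshort _ (wordSpanLT_mono hl (word_sub_word_mem_of_perm hperm)), word_cons,
    hΛH ⟨x, hx⟩, add_zero]

lemma apply_word_map_set (hp : 2 ≤ p) {T : ℕ} (hΛshort : ∀ u ∈ wordSpanLT p pOp T, Λ u = 0)
    {bl : List (Fin n)} (hlen : bl.length ≤ T) (hcount : ∀ i, bl.count i = p - 1)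
    (hΛbl : Λ (word p pOp (bl.map e)) = 1) {t : ℕ} (ht : t < bl.length) (j : Fin n) :
    Λ (word p pOp ((bl.set t j).map e)) = if j = bl[t] then 1 else 0 := by
  split_ifs with hj
  · rw [hj, set_getElem_self, hΛbl]
  · have hcount : p ≤ (bl.set t j).count j := by
      rw [count_set ht, hcount]
      simp [Ne.symm hj]
      omega
    have hperm : (bl.set t j).map e ~
        replicate p (e j) ++ ((bl.set t j).diff (replicate p j)).map e := by
      simpa only [map_append, map_replicate] using (perm_replicate_append_diff hcount).map e
    refine hΛshort _ (wordSpanLT_mono ?_ (word_mem_wordSpanLT_of_perm_replicate hp hperm))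
    simpa using hlen

/-- As a function of the new letter `x`, the left side kills `𝔥` and is `δ_{j, bl[t]}` at `e_j`. -/
lemma apply_word_set_eq_coord (hp : 2 ≤ p) (hΛH : ∀ (h : H) u, Λ (rι k p pOp h * u) = 0)
    {T : ℕ} (hΛshort : ∀ u ∈ wordSpanLT p pOp T, Λ u = 0)
    (he : Submodule.span k (Set.range (Sum.elim e ((↑) : H → L))) = ⊤)
    (b : Module.Basis (Fin n) k (L ⧸ H.toSubmodule)) (hb : ∀ i, b i = Submodule.Quotient.mk (e i))
    {bl : List (Fin n)} (hlen : bl.length ≤ T) (hcount : ∀ i, bl.count i = p - 1)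
    (hΛbl : Λ (word p pOp (bl.map e)) = 1) {t : ℕ} (ht : t < bl.length) (x : L) :
    Λ (word p pOp ((bl.map e).set t x)) = b.coord bl[t] (Submodule.Quotient.mk x) := by
  have ht' : t < (bl.map e).length := by simpa using ht
  let Θ : L →ₗ[k] k := Λ ∘ₗ LinearMap.mulLeft k (word p pOp ((bl.map e).take t)) ∘ₗ
    LinearMap.mulRight k (word p pOp ((bl.map e).drop (t + 1))) ∘ₗ ιₗ p pOp
  have hΘ : ∀ y, Θ y = Λ (word p pOp ((bl.map e).set t y)) := fun y => by
    simp [Θ, word_set _ _ ht', mul_assoc]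
  suffices Θ = b.coord bl[t] ∘ₗ H.toSubmodule.mkQ by rw [← hΘ, this]; rfl
  refine LinearMap.ext_on_range he fun s => ?_
  rcases s with j | ⟨h, hh⟩
  · rw [Sum.elim_inl, hΘ, ← map_set, apply_word_map_set Λ hp hΛshort hlen hcount hΛbl ht,
      LinearMap.comp_apply, Submodule.mkQ_apply, ← hb, Module.Basis.coord_apply,
      Module.Basis.repr_self, Finsupp.single_apply]
  · rw [Sum.elim_inr, hΘ, apply_word_eq_zero_of_mem Λ hΛH hΛshort (by simpa using hlen)
      (mem_set ht' h) hh]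
    simp [(Submodule.Quotient.mk_eq_zero _).2 hh]

lemma apply_word_mul_rι [CharP k p] (hp : 2 ≤ p) (hΛH : ∀ (h : H) u, Λ (rι k p pOp h * u) = 0)
    {T : ℕ} (hΛshort : ∀ u ∈ wordSpanLT p pOp T, Λ u = 0)
    (he : Submodule.span k (Set.range (Sum.elim e ((↑) : H → L))) = ⊤)
    (b : Module.Basis (Fin n) k (L ⧸ H.toSubmodule)) (hb : ∀ i, b i = Submodule.Quotient.mk (e i))
    {bl : List (Fin n)} (hlen : bl.length ≤ T) (hcount : ∀ i, bl.count i = p - 1)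
    (hΛbl : Λ (word p pOp (bl.map e)) = 1) (h : H) :
    Λ (word p pOp (bl.map e) * rι k p pOp h) = trad H h := by
  set F : Fin n → k := fun i => b.coord i (Submodule.Quotient.mk ⁅(h : L), e i⁆)
  have hterm : ∀ t : Fin (bl.map e).length,
      Λ (word p pOp ((bl.map e).set t ⁅(h : L), (bl.map e)[t]⁆)) = F bl[t] := fun t => by
    simp only [Fin.getElem_fin, getElem_map]
    exact apply_word_set_eq_coord Λ hp hΛH hΛshort he b hb hlen hcount hΛbl _ _
  have hsum : ∑ t : Fin (bl.map e).length, F bl[t] = ∑ i, F i * (p - 1 : ℕ) := by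
    rw [Fintype.sum_equiv (finCongr (length_map e)) (fun t => F bl[t])
      (fun t : Fin bl.length => F bl[t]) fun _ => rfl, ← sum_ofFn]
    simp only [Fin.getElem_fin]
    rw [ofFn_getElem_eq_map, ((perm_expList_count bl).map F).sum_eq,
      sum_map_expList]
    simp [hcount, mul_comm]
  have hp1 : ((p - 1 : ℕ) : k) = -1 := by
    rw [Nat.cast_sub (by omega), CharP.cast_eq_zero, Nat.cast_one, zero_sub]
  rw [word_mul_rι, map_sub, hΛH, map_sum, Finset.sum_congr rfl fun t _ => hterm t, hsum,
    trad_eq_sum_coord b hb]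
  simp [F, hp1]

lemma apply_word_mul_rι_of_length_lt (hΛH : ∀ (h : H) u, Λ (rι k p pOp h * u) = 0) {T : ℕ}
    (hΛshort : ∀ u ∈ wordSpanLT p pOp T, Λ u = 0) {l : List L} (hl : l.length < T) (h : H) :
    Λ (word p pOp l * rι k p pOp h) = 0 := by
  rw [word_mul_rι, map_sub, hΛH, map_sum, zero_sub, neg_eq_zero]
  exact Finset.sum_eq_zero fun t _ => hΛshort _ (word_mem_wordSpanLT (by simpa using hl))

lemma apply_eMonR_mul_rι [CharP k p] (hp : 2 ≤ p) (hΛH : ∀ (h : H) u, Λ (rι k p pOp h * u) = 0)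
    (hΛshort : ∀ u ∈ wordSpanLT p pOp (n * (p - 1)), Λ u = 0)
    (he : Submodule.span k (Set.range (Sum.elim e ((↑) : H → L))) = ⊤)
    (b : Module.Basis (Fin n) k (L ⧸ H.toSubmodule)) (hb : ∀ i, b i = Submodule.Quotient.mk (e i))
    {top : Fin n → Fin p} (htop : ∀ i, (top i : ℕ) = p - 1)
    (hΛtop : Λ (eMonR k p pOp e top) = 1) (a : Fin n → Fin p) (h : H) :
    Λ (eMonR k p pOp e a * rι k p pOp h) = if a = top then trad H h else 0 := by
  rw [eMonR_eq_word]
  split_ifs with ha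
  · subst ha
    rw [eMonR_eq_word] at hΛtop
    refine apply_word_mul_rι Λ hp hΛH hΛshort he b hb ?_ (fun i => ?_) hΛtop h
    · simp [length_expList, htop]
    · rw [count_expList, htop]
  · refine apply_word_mul_rι_of_length_lt Λ hΛH hΛshort ?_ h
    have hlt : ∃ i, (a i : ℕ) < p - 1 := by
      by_contra! hge
      exact ha (funext fun i => Fin.ext ((htop i).symm ▸ le_antisymm (by omega) (hge i)))
    obtain ⟨i, hi⟩ := hlt
    calc ((expList fun i => (a i : ℕ)).map e).length = ∑ i, (a i : ℕ) := by
          simp [length_expList]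
      _ < ∑ _i : Fin n, (p - 1) :=
          Finset.sum_lt_sum (fun j _ => by omega) ⟨i, Finset.mem_univ _, hi⟩
      _ = n * (p - 1) := by simp

end Functional

section Counit

lemma algHom_ext {A : Type*} [Ring A] [Algebra k A] {f g : RUEA k L p pOp →ₐ[k] A}
    (h : ∀ x, f (rι k p pOp x) = g (rι k p pOp x)) : f = g :=
  RingQuot.ringQuot_ext' k _ _ (UniversalEnvelopingAlgebra.hom_ext k (LieHom.ext h))

variable (p pOp) in
def counit (hp : p ≠ 0) : RUEA k L p pOp →ₐ[k] k :=
  RingQuot.liftAlgHom k ⟨UniversalEnvelopingAlgebra.lift k 0, by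
    rintro _ _ ⟨x, rfl, rfl⟩
    simp [zero_pow hp]⟩

@[simp] lemma counit_rι (hp : p ≠ 0) (x : L) : counit p pOp hp (rι k p pOp x) = 0 := by
  simp [counit, rι]

end Counit

section TopFunctional

variable {n : ℕ} {H : LieSubalgebra k L} {pOpH : H → H} {φ : RUEA k H p pOpH →ₐ[k] RUEA k L p pOp}
  {e : Fin n → L}
  (hdec : ∀ u, ∃! c : (Fin n → Fin p) → RUEA k L p pOp,
    (∀ a, c a ∈ φ.range) ∧ u = ∑ a, c a * eMonR k p pOp e a)
  (hp0 : p ≠ 0) (top : Fin n → Fin p)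

/-- The functional `Λ`: the counit of the `e^top`-coefficient. -/
def topFunctional : RUEA k L p pOp →ₗ[k] k :=
  (counit p pOp hp0).toLinearMap ∘ₗ LinearMap.proj top ∘ₗ leftCoeff hdec

lemma topFunctional_sum (c : (Fin n → Fin p) → RUEA k H p pOpH) :
    topFunctional hdec hp0 top (∑ a, φ (c a) * eMonR k p pOp e a) =
      counit p pOp hp0 (φ (c top)) := by
  rw [topFunctional, LinearMap.comp_apply, LinearMap.comp_apply,
    leftCoeff_eq hdec fun a => φ.mem_range_self (c a)]
  rfl

lemma topFunctional_mul_left (w : RUEA k H p pOpH) (u : RUEA k L p pOp) :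
    topFunctional hdec hp0 top (φ w * u) =
      counit p pOp hp0 (φ w) * topFunctional hdec hp0 top u := by
  simp [topFunctional, leftCoeff_mul_left hdec (φ.mem_range_self w)]

lemma topFunctional_eMonR (a : Fin n → Fin p) :
    topFunctional hdec hp0 top (eMonR k p pOp e a) = if a = top then 1 else 0 := by
  have h := leftCoeff_mul_self hdec (Subalgebra.one_mem _) a
  rw [one_mul] at h
  simp [topFunctional, h, Pi.single_apply, eq_comm]

variable {top}

lemma topFunctional_eq_zero_of_mem_wordSpanLT (hp : 2 ≤ p) (htop : ∀ i, (top i : ℕ) = p - 1)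
    (hφ : ∀ h : H, φ (rι k p pOpH h) = rι k p pOp (h : L))
    (he : Submodule.span k (Set.range (Sum.elim e ((↑) : H → L))) = ⊤)
    {u : RUEA k L p pOp} (hu : u ∈ wordSpanLT p pOp (n * (p - 1))) :
    topFunctional hdec hp0 top u = 0 := by
  refine Submodule.span_induction (p := fun u _ => topFunctional hdec hp0 top u = 0) ?_ (by simp)
    (fun _ _ _ _ h₁ h₂ => by simp [h₁, h₂]) (fun _ _ _ h => by simp [h])
    (wordSpanLT_le_monomialSpanLT e hp hφ he _ hu)
  rintro _ ⟨w, a, ha, rfl⟩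
  have hne : a ≠ top := by
    rintro rfl
    simp [htop] at ha
  rw [topFunctional_mul_left, topFunctional_eMonR, if_neg hne, mul_zero]

lemma topFunctional_mul_rι [CharP k p] (hp : 2 ≤ p) (htop : ∀ i, (top i : ℕ) = p - 1)
    (hφ : ∀ h : H, φ (rι k p pOpH h) = rι k p pOp (h : L))
    (he : Submodule.span k (Set.range (Sum.elim e ((↑) : H → L))) = ⊤)
    (b : Module.Basis (Fin n) k (L ⧸ H.toSubmodule)) (hb : ∀ i, b i = Submodule.Quotient.mk (e i))
    (h : H) (u : RUEA k L p pOp) :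
    topFunctional hdec hp0 top (u * rι k p pOp h) = trad H h * topFunctional hdec hp0 top u := by
  set Λ := topFunctional hdec hp0 top
  have hΛH (h : H) (u : RUEA k L p pOp) : Λ (rι k p pOp h * u) = 0 := by
    rw [← hφ, topFunctional_mul_left, hφ, counit_rι, zero_mul]
  have hΛmon := apply_eMonR_mul_rι Λ hp hΛH
    (fun _ => topFunctional_eq_zero_of_mem_wordSpanLT hdec hp0 hp htop hφ he) he b hb htop
    (by simpa using topFunctional_eMonR hdec hp0 top top)
  rw [← sum_leftCoeff_mul hdec u, Finset.sum_mul, map_sum, map_sum, Finset.mul_sum]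
  refine Finset.sum_congr rfl fun a _ => ?_
  obtain ⟨w, hw⟩ := (AlgHom.mem_range φ).1 (leftCoeff_mem hdec u a)
  rw [← hw, mul_assoc, topFunctional_mul_left, topFunctional_mul_left, hΛmon,
    topFunctional_eMonR]
  split_ifs <;> ring

end TopFunctional

end RUEA

/-- The linear form `Λ` on `U'(𝔤)` sending `Σ_a v_a·e^a` to `ε_𝔥(v_{(p−1,…,p−1)})` is
well defined and belongs to `Coind'(k)` (the coinduction of the trivial one-dimensional
`U'(𝔥)`-module, whose membership condition is `Λ(h·u) = ε_𝔥(h)·Λ(u)`), and the action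
of each `H ∈ 𝔥` on `Λ`, namely `(H·Λ)(u) = Λ(u·ι'(H))`, is multiplication by
`trad_{𝔤/𝔥}(H)`. -/
theorem statement12
    {k : Type*} [Field k] {L : Type*} [LieRing L] [LieAlgebra k L]
    (p : ℕ) [CharP k p] (hp : 2 < p)
    (pOp : L → L)
    (H : LieSubalgebra k L)
    (pOpH : H → H)
    (φ : RUEA k H p pOpH →ₐ[k] RUEA k L p pOp)
    (hφ : ∀ h : H, φ (rι k p pOpH h) = rι k p pOp (h : L))
    (n : ℕ) (e : Fin n → L)
    (hli : LinearIndependent k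
      (fun i => Submodule.Quotient.mk (p := H.toSubmodule) (e i)))
    (hsp : Submodule.span k
      (Set.range fun i => Submodule.Quotient.mk (p := H.toSubmodule) (e i)) = ⊤)
    (hdec : ∀ u : RUEA k L p pOp, ∃! c : (Fin n → Fin p) → RUEA k L p pOp,
      (∀ a, c a ∈ Set.range φ) ∧
        u = ∑ a : Fin n → Fin p, c a * eMonR k p pOp e a)
    (εH : RUEA k H p pOpH →ₐ[k] k)
    (hεH : ∀ h : H, εH (rι k p pOpH h) = 0) :
    ∃ Λ : RUEA k L p pOp →ₗ[k] k,
      (∀ c : (Fin n → Fin p) → RUEA k H p pOpH,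
        Λ (∑ a : Fin n → Fin p, φ (c a) * eMonR k p pOp e a)
          = εH (c fun _ => (⟨p - 1, by omega⟩ : Fin p))) ∧
      (∀ (w : RUEA k H p pOpH) (u : RUEA k L p pOp),
        Λ (φ w * u) = εH w * Λ u) ∧
      (∀ (h : H) (u : RUEA k L p pOp),
        Λ (u * rι k p pOp (h : L)) = trad H h * Λ u) := by
  have hp0 : p ≠ 0 := by omega
  replace hdec : ∀ u, ∃! c : (Fin n → Fin p) → RUEA k L p pOp,
      (∀ a, c a ∈ φ.range) ∧ u = ∑ a, c a * eMonR k p pOp e a := hdec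
  have hεφ : (RUEA.counit p pOp hp0).comp φ = εH :=
    RUEA.algHom_ext fun h => by simp [hφ, hεH]
  refine ⟨RUEA.topFunctional hdec hp0 fun _ => ⟨p - 1, by omega⟩, fun c => ?_, fun w u => ?_,
    RUEA.topFunctional_mul_rι hdec hp0 hp.le (fun _ => rfl) hφ
      (RUEA.span_range_sumElim_eq_top hsp) (Module.Basis.mk hli hsp.ge)
      (Module.Basis.mk_apply hli hsp.ge)⟩
  · rw [RUEA.topFunctional_sum, ← hεφ, AlgHom.comp_apply]
  · rw [RUEA.topFunctional_mul_left, ← hεφ, AlgHom.comp_apply]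
end
end
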